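/- Let G be a finite group and H ≤ G a subgroup such that every conjugacy class of G meets H. Then every complex character of G is a rational linear combination of characters induced from H (a special case of Artin's induction theorem for a single subgroup meeting all classes): two class functions on G agreeing on all induced characters' inner products with characters of H are equal, equivalently the induced characters from irreducible characters of H span the space of class functions of G over ℂ. -/

import Mathlib

open scoped Classical

/-- Induction of a class function from a subgroup `H` of a finite group `G`:
`(Ind f)(g) = |H|⁻¹ ∑_{x ∈ G} ḟ(x⁻¹ g x)`, where `ḟ` is `f` extended by zero
outside `H`. -/
noncomputable def indClassFun (G : Type*) [Group G] [Fintype G] (H : Subgroup G)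
    (f : H → ℂ) : G → ℂ := fun g =>
  (Nat.card H : ℂ)⁻¹ * ∑ x : G, if h : x⁻¹ * g * x ∈ H then f ⟨x⁻¹ * g * x, h⟩ else 0

/-!
A class function `F` on `G` restricts to a class function on `H`, and inducing that restriction
back multiplies `F` by `N(g) / |H|`, where `N(g)` counts the `x ∈ G` with `x⁻¹ g x ∈ H`. Since
`N` is itself a class function and never vanishes when every class meets `H`, the class function
`|H| F / N` restricts to an `f` with `Ind f = F`.
-/

open Finset

namespace Subgroup

variable {G : Type*} [Group G] [Fintype G]

noncomputable def conjIntoCount (H : Subgroup G) (g : G) : ℕ :=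
  #{x : G | x⁻¹ * g * x ∈ H}

theorem conjIntoCount_pos {H : Subgroup G} (hmeet : ∀ g : G, ∃ x : G, x⁻¹ * g * x ∈ H)
    (g : G) : 0 < H.conjIntoCount g := by
  obtain ⟨x, hx⟩ := hmeet g
  exact card_pos.2 ⟨x, by simpa using hx⟩

theorem conjIntoCount_conj (H : Subgroup G) (y g : G) :
    H.conjIntoCount (y * g * y⁻¹) = H.conjIntoCount g :=
  card_equiv (Equiv.mulLeft y⁻¹) fun x => by simp [mul_assoc]

end Subgroup

open Subgroup

theorem indClassFun_restrict {G : Type*} [Group G] [Fintype G] (H : Subgroup G) {F : G → ℂ}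
    (hF : ∀ x g : G, F (x * g * x⁻¹) = F g) (g : G) :
    indClassFun G H (fun k => F k) g = (Nat.card H : ℂ)⁻¹ * (H.conjIntoCount g * F g) := by
  have hF' : ∀ x : G, F (x⁻¹ * g * x) = F g := fun x => by simpa using hF x⁻¹ g
  simp only [indClassFun, dite_eq_ite, hF', sum_ite, sum_const_zero, add_zero, sum_const,
    nsmul_eq_mul, conjIntoCount]

/-- Artin's induction theorem for a single subgroup meeting all conjugacy classes:
if every conjugacy class of the finite group `G` meets the subgroup `H`, then every
class function on `G` (in particular every character) lies in the `ℂ`-span of the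
class functions induced from `H`. -/
theorem artin_induction_single_subgroup (G : Type*) [Group G] [Fintype G]
    (H : Subgroup G) (hmeet : ∀ g : G, ∃ x : G, x⁻¹ * g * x ∈ H)
    (F : G → ℂ) (hF : ∀ x g : G, F (x * g * x⁻¹) = F g) :
    F ∈ Submodule.span ℂ {F' : G → ℂ |
      ∃ f : H → ℂ, (∀ x g : H, f (x * g * x⁻¹) = f g) ∧ F' = indClassFun G H f} := by
  have hN (g : G) : (H.conjIntoCount g : ℂ) ≠ 0 :=
    Nat.cast_ne_zero.2 (conjIntoCount_pos hmeet g).ne'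
  have hH : (Nat.card H : ℂ) ≠ 0 := Nat.cast_ne_zero.2 Nat.card_pos.ne'
  set F' : G → ℂ := fun g => Nat.card H * F g / H.conjIntoCount g
  have hF' : ∀ x g : G, F' (x * g * x⁻¹) = F' g := by
    simp [F', hF, conjIntoCount_conj]
  refine Submodule.subset_span ⟨fun k => F' k, fun x g => by simpa using hF' x g, ?_⟩
  funext g
  rw [indClassFun_restrict H hF']
  simp only [F']
  field_simp [hN g]
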